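/- Let a, b ∈ [0,1) with a > 0 or b > 0, and let N be the norm on ℝ² defined by N(c,d) = max{ |c|, |d|, ((1−b)|c| + (1−a)|d|)/(1−ab) }. Then there is a λ ∈ (0,1) such that N(2λ + (1−λ)a, 2(1−λ) + λb) < 1 + N(λ, 1−λ). -/

import Mathlib

/-!
Write `φ(c, d) = ((1 - b) c + (1 - a) d) / (1 - a b)` for the third term of the norm. The point
`(2λ + (1 - λ) a, 2(1 - λ) + λ b)` is `(λ, 1 - λ) + λ (1, b) + (1 - λ) (a, 1)`, and `φ` is linear
with `φ(1, b) = φ(a, 1) = 1`, so `φ` takes the value `1 + φ(λ, 1 - λ)` there. For `a > 0` and `λ`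
small, `φ(λ, 1 - λ)` stays below `1 - λ = N(λ, 1 - λ)` (at `λ = 0` it is `(1 - a)/(1 - a b) < 1`),
and both coordinates stay below `2 - λ`; `λ = a / 4` works. The case `b > 0` is the mirror
image under `(c, d) ↦ (d, c)`, `a ↔ b`, `λ ↔ 1 - λ`.
-/

noncomputable section

/-- For `a, b ∈ [0,1)`, the generic absolute normalized norm with the positive strong
diameter 2 property: `N(c,d) = max{|c|, |d|, ((1-b)|c| + (1-a)|d|)/(1-ab)}`. -/
def genNorm (a b : ℝ) (u : ℝ × ℝ) : ℝ :=
  max (max |u.1| |u.2|) (((1 - b) * |u.1| + (1 - a) * |u.2|) / (1 - a * b))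

lemma genNorm_swap (a b : ℝ) (u : ℝ × ℝ) : genNorm b a u.swap = genNorm a b u := by
  simp only [genNorm, Prod.fst_swap, Prod.snd_swap]
  rw [max_comm |u.2|, mul_comm b a, add_comm ((1 - a) * |u.2|)]

lemma genNorm_of_nonneg (a b : ℝ) {c d : ℝ} (hc : 0 ≤ c) (hd : 0 ≤ d) :
    genNorm a b (c, d) = max (max c d) (((1 - b) * c + (1 - a) * d) / (1 - a * b)) := by
  simp only [genNorm, abs_of_nonneg hc, abs_of_nonneg hd]

lemma weight_shift (a b l : ℝ) (hab : 1 - a * b ≠ 0) :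
    ((1 - b) * (2 * l + (1 - l) * a) + (1 - a) * (2 * (1 - l) + l * b)) / (1 - a * b) =
      1 + ((1 - b) * l + (1 - a) * (1 - l)) / (1 - a * b) := by
  rw [div_eq_iff hab, add_mul, div_mul_cancel₀ _ hab]
  ring

lemma exists_lambda_genNorm_of_pos {a b : ℝ} (ha0 : 0 < a) (ha1 : a < 1)
    (hb0 : 0 ≤ b) (hb1 : b < 1) :
    ∃ l : ℝ, 0 < l ∧ l < 1 ∧
      genNorm a b (2 * l + (1 - l) * a, 2 * (1 - l) + l * b) <
        1 + genNorm a b (l, 1 - l) := by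
  set l := a / 4 with hl
  have hab : 0 < 1 - a * b := by nlinarith
  have hweight : ((1 - b) * l + (1 - a) * (1 - l)) / (1 - a * b) < 1 - l := by
    rw [div_lt_iff₀ hab]
    nlinarith [mul_pos ha0 (sub_pos.mpr hb1)]
  have hnorm : genNorm a b (l, 1 - l) = 1 - l := by
    rw [genNorm_of_nonneg a b (by positivity) (by linarith),
      max_eq_right (by linarith : l ≤ 1 - l), max_eq_left hweight.le]
  refine ⟨l, by positivity, by linarith, ?_⟩
  rw [hnorm, genNorm_of_nonneg a b (by nlinarith) (by nlinarith), weight_shift a b l hab.ne']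
  exact max_lt (max_lt (by nlinarith) (by nlinarith)) (by linarith)

/-- Lemma 3.10: there is `λ ∈ (0,1)` with
`N(2λ + (1-λ)a, 2(1-λ) + λb) < 1 + N(λ, 1-λ)`. -/
theorem exists_lambda_genNorm (a b : ℝ) (ha0 : 0 ≤ a) (ha1 : a < 1)
    (hb0 : 0 ≤ b) (hb1 : b < 1) (hab : 0 < a ∨ 0 < b) :
    ∃ l : ℝ, 0 < l ∧ l < 1 ∧
      genNorm a b (2 * l + (1 - l) * a, 2 * (1 - l) + l * b) <
        1 + genNorm a b (l, 1 - l) := by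
  rcases hab with ha | hb
  · exact exists_lambda_genNorm_of_pos ha ha1 hb0 hb1
  · obtain ⟨l, hl0, hl1, h⟩ := exists_lambda_genNorm_of_pos hb hb1 ha0 ha1
    refine ⟨1 - l, by linarith, by linarith, ?_⟩
    rw [← genNorm_swap a b, ← genNorm_swap a b (1 - l, _)]
    simpa only [Prod.swap_prod_mk, sub_sub_cancel] using h
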